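/- For k=2, f(−q⁴,−q) = (q;q)_∞ · ∑_{l=0}^∞ q^{l²+l}/(q;q)_l (the first Rogers–Ramanujan-type specialization). -/

import Mathlib

noncomputable def qPoch (q : ℝ) (n : ℕ) : ℝ := ∏ j ∈ Finset.range n, (1 - q ^ (j + 1))

noncomputable def ramTheta (a b : ℝ) : ℝ :=
  (∑' i : ℕ, a ^ (i * (i + 1) / 2) * b ^ (i * (i - 1) / 2)) +
    ∑' i : ℕ, a ^ ((i + 1) * i / 2) * b ^ ((i + 1) * (i + 2) / 2)

/-!
This is the limit of a finite identity due to Schur and Andrews. The fermionic polynomials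
`D n = ∑_{i + j = n} q^(j² + j) [i, j]_q` and the bosonic polynomials
`E n = ∑_{k ∈ ℤ} (-1)^k q^(k(5k+3)/2) [n + 1, ⌊(n - 5k)/2⌋]_q` both satisfy
`u (n + 2) = u (n + 1) + q^(n + 2) u n` with `u 0 = u 1 = 1`. For `D` this is one q-Pascal step;
for `E`, after q-Pascal, the contributions of `k` and `k + 1` to the recurrence defect cancel
whenever `n + k` is odd. For `|q| < 1` let `n → ∞` under dominated convergence:
`[n - j, j]_q → 1/(q;q)_j` and `[n + 1, ⌊(n - 5k)/2⌋]_q → 1/(q;q)_∞`, so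
`∑ q^(l² + l)/(q;q)_l = (∑_k (-1)^k q^(k(5k+3)/2)) / (q;q)_∞`, and the bilateral sum,
split at `k = 0`, is `f(-q⁴, -q)`.
-/

open Finset Filter Topology

section GaussianBinomial

variable {R : Type*} [CommRing R] (q : R)

def qBinom : ℕ → ℕ → R
  | _, 0 => 1
  | 0, _ + 1 => 0
  | n + 1, k + 1 => qBinom n k + q ^ (k + 1) * qBinom n (k + 1)

@[simp]
theorem qBinom_zero_right (n : ℕ) : qBinom q n 0 = 1 := by
  cases n <;> rfl

@[simp]
theorem qBinom_zero_succ (k : ℕ) : qBinom q 0 (k + 1) = 0 := rfl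

theorem qBinom_succ_succ (n k : ℕ) :
    qBinom q (n + 1) (k + 1) = qBinom q n k + q ^ (k + 1) * qBinom q n (k + 1) := rfl

theorem qBinom_eq_zero_of_lt {n k : ℕ} (h : n < k) : qBinom q n k = 0 := by
  induction n generalizing k with
  | zero => obtain ⟨k, rfl⟩ := Nat.exists_eq_add_one_of_ne_zero (by omega : k ≠ 0); rfl
  | succ n ih =>
    obtain ⟨k, rfl⟩ := Nat.exists_eq_add_one_of_ne_zero (by omega : k ≠ 0)
    rw [qBinom_succ_succ, ih (by omega), ih (by omega), mul_zero, add_zero]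

@[simp]
theorem qBinom_self (n : ℕ) : qBinom q n n = 1 := by
  induction n with
  | zero => rfl
  | succ n ih =>
    rw [qBinom_succ_succ, ih, qBinom_eq_zero_of_lt q (Nat.lt_succ_self n), mul_zero, add_zero]

theorem pow_mul_qBinom_congr {n k a b : ℕ} (h : k ≤ n → a = b) :
    q ^ a * qBinom q n k = q ^ b * qBinom q n k := by
  rcases le_or_gt k n with hk | hk
  · rw [h hk]
  · rw [qBinom_eq_zero_of_lt q hk, mul_zero, mul_zero]

theorem qBinom_succ_succ' (n k : ℕ) :
    qBinom q (n + 1) (k + 1) = qBinom q n (k + 1) + q ^ (n - k) * qBinom q n k := by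
  induction n generalizing k with
  | zero => simp [qBinom_succ_succ]
  | succ n ih =>
    cases k with
    | zero =>
      conv_lhs => rw [qBinom_succ_succ, ih]
      rw [qBinom_succ_succ q n 0]
      simp only [qBinom_zero_right, Nat.sub_zero]
      ring
    | succ j =>
      have hpow : q ^ (j + 2) * q ^ (n - (j + 1)) * qBinom q n (j + 1)
          = q ^ (n - j) * q ^ (j + 1) * qBinom q n (j + 1) := by
        simp only [← pow_add]
        exact pow_mul_qBinom_congr q (by omega)
      conv_lhs => rw [qBinom_succ_succ, ih, ih]
      rw [qBinom_succ_succ q n j, qBinom_succ_succ q n (j + 1), Nat.add_sub_add_right]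
      linear_combination hpow

def qBinomInt (n : ℕ) : ℤ → R
  | (k : ℕ) => qBinom q n k
  | Int.negSucc _ => 0

@[simp]
theorem qBinomInt_natCast (n k : ℕ) : qBinomInt q n k = qBinom q n k := rfl

theorem qBinomInt_eq_zero {n : ℕ} {k : ℤ} (h : k < 0 ∨ n < k) : qBinomInt q n k = 0 := by
  rcases h with h | h
  · obtain ⟨j, rfl⟩ := Int.exists_eq_neg_ofNat h.le
    obtain ⟨i, rfl⟩ := Nat.exists_eq_add_one_of_ne_zero (by omega : j ≠ 0)
    rfl
  · lift k to ℕ using by omega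
    exact qBinom_eq_zero_of_lt q (by omega)

theorem pow_mul_qBinomInt_congr {n a b : ℕ} {k : ℤ} (h : 0 ≤ k → k ≤ n → a = b) :
    q ^ a * qBinomInt q n k = q ^ b * qBinomInt q n k := by
  by_cases hk : 0 ≤ k ∧ k ≤ n
  · rw [h hk.1 hk.2]
  · rw [qBinomInt_eq_zero q (by omega), mul_zero, mul_zero]

@[simp]
theorem qBinomInt_zero (n : ℕ) : qBinomInt q n 0 = 1 := qBinom_zero_right q n

theorem qBinomInt_succ_add_one (n : ℕ) (k : ℤ) :
    qBinomInt q (n + 1) (k + 1)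
      = qBinomInt q n k + q ^ (k + 1).toNat * qBinomInt q n (k + 1) := by
  rcases (by omega : 0 ≤ k ∨ k = -1 ∨ k < -1) with hk | rfl | hk
  · lift k to ℕ using hk
    rw [← Nat.cast_succ, qBinomInt_natCast, qBinomInt_natCast, qBinomInt_natCast,
      Int.toNat_natCast, qBinom_succ_succ]
  · simp [qBinomInt_eq_zero q (Or.inl (by omega : (-1 : ℤ) < 0))]
  · simp [qBinomInt_eq_zero q (Or.inl (by omega : k < 0)),
      qBinomInt_eq_zero q (Or.inl (by omega : k + 1 < 0))]

theorem qBinomInt_succ_add_one' (n : ℕ) (k : ℤ) :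
    qBinomInt q (n + 1) (k + 1)
      = qBinomInt q n (k + 1) + q ^ (n - k).toNat * qBinomInt q n k := by
  rcases (by omega : 0 ≤ k ∨ k = -1 ∨ k < -1) with hk | rfl | hk
  · lift k to ℕ using hk
    rw [← Nat.cast_succ, qBinomInt_natCast, qBinomInt_natCast, qBinomInt_natCast,
      show ((n : ℤ) - k).toNat = n - k by omega, qBinom_succ_succ']
  · simp [qBinomInt_eq_zero q (Or.inl (by omega : (-1 : ℤ) < 0))]
  · simp [qBinomInt_eq_zero q (Or.inl (by omega : k < 0)),
      qBinomInt_eq_zero q (Or.inl (by omega : k + 1 < 0))]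

theorem qBinomInt_add_two_sub_add_one (m : ℕ) (b : ℤ) :
    qBinomInt q (m + 2) (b + 1) - qBinomInt q (m + 1) b - q ^ (m + 1) * qBinomInt q m b
      = q ^ (b + 1).toNat * qBinomInt q m (b + 1) := by
  have hpow : q ^ (b + 1).toNat * q ^ (m - b).toNat * qBinomInt q m b
      = q ^ (m + 1) * qBinomInt q m b := by
    rw [← pow_add]
    exact pow_mul_qBinomInt_congr q (by omega)
  rw [qBinomInt_succ_add_one q (m + 1) b, qBinomInt_succ_add_one' q m b]
  linear_combination hpow

theorem qBinomInt_add_two_sub_add_three (m : ℕ) (b : ℤ) :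
    qBinomInt q (m + 2) (b + 3) - qBinomInt q (m + 1) (b + 3)
        - q ^ (m + 1) * qBinomInt q m (b + 2) = q ^ (m - b - 1).toNat * qBinomInt q m (b + 1) := by
  have hpow : q ^ (m - b - 1).toNat * q ^ (b + 2).toNat * qBinomInt q m (b + 2)
      = q ^ (m + 1) * qBinomInt q m (b + 2) := by
    rw [← pow_add]
    exact pow_mul_qBinomInt_congr q (by omega)
  rw [show b + 3 = b + 2 + 1 by ring, qBinomInt_succ_add_one' q (m + 1) (b + 2),
    show b + 2 = b + 1 + 1 by ring, qBinomInt_succ_add_one q m (b + 1)]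
  push_cast
  rw [show (m : ℤ) + 1 - (b + 1 + 1) = m - b - 1 by ring, show b + 1 + 1 = b + 2 by ring]
  linear_combination hpow

end GaussianBinomial

section Bosonic

variable {R : Type*} [CommRing R] (q : R)

/-- `k (5k + 3)` is even and nonnegative for every integer `k`, so `toNat` loses nothing. -/
def rrExponent (k : ℤ) : ℕ := (k * (5 * k + 3) / 2).toNat

theorem two_mul_rrExponent (k : ℤ) : 2 * (rrExponent k : ℤ) = k * (5 * k + 3) := by
  obtain ⟨t, ht⟩ := Int.even_mul_succ_self k
  have hev : k * (5 * k + 3) = 2 * (t + 2 * k * k + k) := by linear_combination ht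
  have hnn : 0 ≤ k * (5 * k + 3) := by rcases le_or_gt 0 k with h | h <;> nlinarith
  unfold rrExponent
  omega

theorem natAbs_le_rrExponent (k : ℤ) : k.natAbs ≤ rrExponent k := by
  have h := two_mul_rrExponent k
  rcases le_or_gt 0 k with hk | hk
  · have : 2 * k ≤ k * (5 * k + 3) := by nlinarith
    omega
  · have : -2 * k ≤ k * (5 * k + 3) := by nlinarith
    omega

theorem neg_one_pow_natAbs_add_one {M : Type*} [Monoid M] [HasDistribNeg M] (k : ℤ) :
    (-1 : M) ^ (k + 1).natAbs = -(-1) ^ k.natAbs := by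
  rcases Int.even_or_odd k with hk | hk
  · rw [(Int.natAbs_even.mpr hk).neg_one_pow, (Int.natAbs_odd.mpr hk.add_one).neg_one_pow]
  · rw [(Int.natAbs_odd.mpr hk).neg_one_pow, (Int.natAbs_even.mpr hk.add_one).neg_one_pow,
      neg_neg]

def thetaTerm (k : ℤ) : R := (-1) ^ k.natAbs * q ^ rrExponent k

def bosonicTerm (n : ℕ) (k : ℤ) : R := thetaTerm q k * qBinomInt q (n + 1) ((n - 5 * k) / 2)

theorem bosonicTerm_defect_add_defect_succ (n : ℕ) (k : ℤ) (h : (n + k) % 2 = 1) :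
    (bosonicTerm q (n + 2) k - bosonicTerm q (n + 1) k - q ^ (n + 2) * bosonicTerm q n k) +
      (bosonicTerm q (n + 2) (k + 1) - bosonicTerm q (n + 1) (k + 1)
        - q ^ (n + 2) * bosonicTerm q n (k + 1)) = 0 := by
  obtain ⟨b, hb⟩ : ∃ b : ℤ, (n : ℤ) - 5 * k = 2 * b + 5 :=
    ⟨(n - 5 * k - 5) / 2, by omega⟩
  have hpow : q ^ rrExponent k * q ^ ((n : ℤ) + 1 - b - 1).toNat * qBinomInt q (n + 1) (b + 1)
      = q ^ rrExponent (k + 1) * q ^ (b + 1).toNat * qBinomInt q (n + 1) (b + 1) := by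
    simp only [← pow_add]
    refine pow_mul_qBinomInt_congr q fun _ _ => ?_
    have := two_mul_rrExponent k
    have := two_mul_rrExponent (k + 1)
    have : (k + 1) * (5 * (k + 1) + 3) = k * (5 * k + 3) + 10 * k + 8 := by ring
    omega
  have hshift := qBinomInt_add_two_sub_add_one q (n + 1) b
  have hfixed := qBinomInt_add_two_sub_add_three q (n + 1) b
  simp only [bosonicTerm, thetaTerm, neg_one_pow_natAbs_add_one]
  push_cast at hshift hfixed ⊢
  rw [show ((n : ℤ) + 2 - 5 * k) / 2 = b + 3 by omega,
    show ((n : ℤ) + 1 - 5 * k) / 2 = b + 3 by omega,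
    show ((n : ℤ) - 5 * k) / 2 = b + 2 by omega,
    show ((n : ℤ) + 2 - 5 * (k + 1)) / 2 = b + 1 by omega,
    show ((n : ℤ) + 1 - 5 * (k + 1)) / 2 = b by omega,
    show ((n : ℤ) - 5 * (k + 1)) / 2 = b by omega]
  linear_combination (-1 : R) ^ k.natAbs * q ^ rrExponent k * hfixed
    - (-1 : R) ^ k.natAbs * q ^ rrExponent (k + 1) * hshift + (-1 : R) ^ k.natAbs * hpow

noncomputable def bosonicSum (n : ℕ) : R := ∑ᶠ k : ℤ, bosonicTerm q n k

theorem bosonicTerm_eq_zero {n : ℕ} {k : ℤ}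
    (h : ((n : ℤ) - 5 * k) / 2 < 0 ∨ n + 1 < ((n : ℤ) - 5 * k) / 2) :
    bosonicTerm q n k = 0 := by
  rw [bosonicTerm, qBinomInt_eq_zero q (by push_cast; exact h), mul_zero]

theorem bosonicSum_eq_sum {n : ℕ} {s : Finset ℤ}
    (hs : ∀ k ∉ s, ((n : ℤ) - 5 * k) / 2 < 0 ∨ n + 1 < ((n : ℤ) - 5 * k) / 2) :
    bosonicSum q n = ∑ k ∈ s, bosonicTerm q n k :=
  finsum_eq_sum_of_support_subset _ fun k hk =>
    by_contra fun h => hk (bosonicTerm_eq_zero q (hs k h))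

theorem bosonicSum_add_two (n : ℕ) :
    bosonicSum q (n + 2) = bosonicSum q (n + 1) + q ^ (n + 2) * bosonicSum q n := by
  let s := Ico (-(n : ℤ) - 3) (n + 3)
  have hs : ∀ m ≤ n + 2, ∀ k ∉ s,
      ((m : ℤ) - 5 * k) / 2 < 0 ∨ m + 1 < ((m : ℤ) - 5 * k) / 2 :=
    fun m hm k hk => by rw [mem_Ico] at hk; omega
  rw [bosonicSum_eq_sum q (hs _ le_rfl), bosonicSum_eq_sum q (hs _ (by omega)),
    bosonicSum_eq_sum q (hs _ (by omega)), mul_sum, ← sub_eq_zero, ← sub_sub,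
    ← sum_sub_distrib, ← sum_sub_distrib]
  refine sum_involution (fun k _ => if (n + k) % 2 = 1 then k + 1 else k - 1)
    (fun k _ => ?_) (fun k _ _ => by split_ifs <;> omega) (fun k hk => ?_) (fun k _ => ?_)
  · split_ifs with h
    · exact bosonicTerm_defect_add_defect_succ q n k h
    · rw [add_comm]
      simpa using bosonicTerm_defect_add_defect_succ q n (k - 1) (by omega)
  · simp only [s, mem_Ico] at hk ⊢
    split_ifs <;> omega
  · split_ifs <;> omega

theorem bosonicSum_zero : bosonicSum q 0 = 1 := by
  rw [bosonicSum_eq_sum q (s := {0}) fun k hk => by rw [mem_singleton] at hk; omega]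
  simp [bosonicTerm, thetaTerm, rrExponent]

theorem bosonicSum_one : bosonicSum q 1 = 1 := by
  rw [bosonicSum_eq_sum q (s := {0}) fun k hk => by rw [mem_singleton] at hk; omega]
  simp [bosonicTerm, thetaTerm, rrExponent]

end Bosonic

section Fermionic

variable {R : Type*} [CommRing R] (q : R)

def fermionicSum (n : ℕ) : R := ∑ p ∈ antidiagonal n, q ^ (p.2 ^ 2 + p.2) * qBinom q p.1 p.2

theorem fermionicSum_add_two (n : ℕ) :
    fermionicSum q (n + 2) = fermionicSum q (n + 1) + q ^ (n + 2) * fermionicSum q n := by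
  have h₂ : fermionicSum q (n + 2) = 1 + ∑ p ∈ antidiagonal n,
      q ^ ((p.2 + 1) ^ 2 + (p.2 + 1)) * qBinom q (p.1 + 1) (p.2 + 1) := by
    rw [fermionicSum, Nat.sum_antidiagonal_succ', Nat.sum_antidiagonal_succ]
    simp
  have h₁ : fermionicSum q (n + 1) = 1 + ∑ p ∈ antidiagonal n,
      q ^ ((p.2 + 1) ^ 2 + (p.2 + 1)) * qBinom q p.1 (p.2 + 1) := by
    rw [fermionicSum, Nat.sum_antidiagonal_succ']
    simp
  rw [h₂, h₁, fermionicSum, mul_sum, add_assoc, ← sum_add_distrib]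
  congr 1
  refine sum_congr rfl fun p hp => ?_
  have hpow : q ^ ((p.2 + 1) ^ 2 + (p.2 + 1)) * q ^ (p.1 - p.2) * qBinom q p.1 p.2
      = q ^ (n + 2) * q ^ (p.2 ^ 2 + p.2) * qBinom q p.1 p.2 := by
    simp only [← pow_add]
    refine pow_mul_qBinom_congr q fun _ => ?_
    have := mem_antidiagonal.mp hp
    have : (p.2 + 1) ^ 2 = p.2 ^ 2 + 2 * p.2 + 1 := by ring
    omega
  rw [qBinom_succ_succ']
  linear_combination hpow

theorem fermionicSum_eq_bosonicSum : ∀ n : ℕ, fermionicSum q n = bosonicSum q n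
  | 0 => by simp [fermionicSum, bosonicSum_zero]
  | 1 => by simp [fermionicSum, Nat.sum_antidiagonal_succ, bosonicSum_one]
  | n + 2 => by
    rw [fermionicSum_add_two, bosonicSum_add_two, fermionicSum_eq_bosonicSum n,
      fermionicSum_eq_bosonicSum (n + 1)]

end Fermionic

section Theta

variable {R : Type*} [CommRing R] (q : R)

theorem thetaTerm_eq_neg_pow_mul_neg_pow (k : ℤ) {a b : ℕ} (hsq : a + b = k.natAbs ^ 2)
    (hexp : 4 * a + b = rrExponent k) : thetaTerm q k = (-(q ^ 4)) ^ a * (-q) ^ b := by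
  have hsign : (-1 : R) ^ (a + b) = (-1) ^ k.natAbs := by
    rw [hsq]
    rcases Nat.even_or_odd k.natAbs with h | h
    · rw [h.neg_one_pow, ((Nat.even_pow' two_ne_zero).mpr h).neg_one_pow]
    · rw [h.neg_one_pow, (h.pow (n := 2)).neg_one_pow]
  rw [thetaTerm, ← hsign, ← hexp, neg_pow (q ^ 4), neg_pow q, ← pow_mul]
  ring

theorem thetaTerm_natCast (i : ℕ) :
    thetaTerm q i = (-(q ^ 4)) ^ (i * (i + 1) / 2) * (-q) ^ (i * (i - 1) / 2) := by
  have he := two_mul_rrExponent (i : ℤ)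
  cases i with
  | zero => simp [thetaTerm, rrExponent]
  | succ j =>
    have ha := Nat.two_mul_div_two_of_even (Nat.even_mul_succ_self (j + 1))
    have hb := Nat.two_mul_div_two_of_even (Nat.even_mul_pred_self (j + 1))
    simp only [Nat.add_sub_cancel] at hb ⊢
    have : ((j + 1 : ℕ) : ℤ) * (5 * (j + 1 : ℕ) + 3)
        = ((4 * ((j + 1) * (j + 1 + 1)) + (j + 1) * j : ℕ) : ℤ) := by
      push_cast; ring
    refine thetaTerm_eq_neg_pow_mul_neg_pow q _ ?_ ?_
    · have : (j + 1) * (j + 1 + 1) + (j + 1) * j = 2 * (j + 1) ^ 2 := by ring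
      simp only [Int.natAbs_natCast]
      omega
    · omega

theorem thetaTerm_neg_succ (i : ℕ) :
    thetaTerm q (-(i + 1))
      = (-(q ^ 4)) ^ ((i + 1) * i / 2) * (-q) ^ ((i + 1) * (i + 2) / 2) := by
  have he := two_mul_rrExponent (-(i + 1 : ℤ))
  have ha := Nat.two_mul_div_two_of_even (Nat.even_mul_pred_self (i + 1))
  have hb := Nat.two_mul_div_two_of_even (Nat.even_mul_succ_self (i + 1))
  simp only [Nat.add_sub_cancel, add_assoc, Nat.reduceAdd] at ha hb
  have : -((i : ℤ) + 1) * (5 * -((i : ℤ) + 1) + 3)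
      = ((4 * ((i + 1) * i) + (i + 1) * (i + 2) : ℕ) : ℤ) := by
    push_cast; ring
  refine thetaTerm_eq_neg_pow_mul_neg_pow q _ ?_ ?_
  · have : (i + 1) * i + (i + 1) * (i + 2) = 2 * (i + 1) ^ 2 := by ring
    rw [show -((i : ℤ) + 1) = -((i + 1 : ℕ) : ℤ) by push_cast; ring, Int.natAbs_neg,
      Int.natAbs_natCast]
    omega
  · omega

end Theta

section Analytic

variable {q : ℝ}

theorem qPoch_succ (q : ℝ) (n : ℕ) : qPoch q (n + 1) = qPoch q n * (1 - q ^ (n + 1)) :=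
  prod_range_succ _ _

theorem qBinom_mul_qPoch (q : ℝ) {n k : ℕ} (h : k ≤ n) :
    qBinom q n k * (qPoch q k * qPoch q (n - k)) = qPoch q n := by
  induction n generalizing k with
  | zero =>
    obtain rfl : k = 0 := by omega
    simp [qPoch]
  | succ n ih =>
    cases k with
    | zero => simp [qPoch]
    | succ k =>
      rcases (by omega : k = n ∨ k < n) with rfl | hk
      · simp [qPoch]
      · have h₁ := ih hk.le
        have h₂ := ih hk
        have hsplit : qPoch q (n - k) = qPoch q (n - (k + 1)) * (1 - q ^ (n - k)) := by
          rw [show n - k = n - (k + 1) + 1 by omega]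
          exact qPoch_succ q _
        have hpow : q ^ (k + 1) * q ^ (n - k) = q ^ (n + 1) := by
          rw [← pow_add, show k + 1 + (n - k) = n + 1 by omega]
        rw [qPoch_succ] at h₂
        rw [qBinom_succ_succ, qPoch_succ, qPoch_succ, Nat.add_sub_add_right]
        linear_combination (1 - q ^ (k + 1)) * h₁ + q ^ (k + 1) * (1 - q ^ (n - k)) * h₂
          + q ^ (k + 1) * qBinom q n (k + 1) * qPoch q k * (1 - q ^ (k + 1)) * hsplit
          - qPoch q n * hpow

theorem one_sub_pow_succ_pos (hq : |q| < 1) (j : ℕ) : 0 < 1 - q ^ (j + 1) := by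
  have : q ^ (j + 1) < 1 :=
    (le_abs_self _).trans_lt (by rw [abs_pow]; exact pow_lt_one₀ (abs_nonneg q) hq (by omega))
  linarith

theorem qPoch_pos (hq : |q| < 1) (n : ℕ) : 0 < qPoch q n :=
  prod_pos fun j _ => one_sub_pow_succ_pos hq j

theorem summable_norm_neg_pow_succ (hq : |q| < 1) : Summable fun j : ℕ => ‖-q ^ (j + 1)‖ := by
  simpa [pow_succ] using (summable_geometric_of_lt_one (abs_nonneg q) hq).mul_right |q|

theorem hasProd_one_sub_pow_succ (hq : |q| < 1) :
    HasProd (fun j : ℕ => 1 - q ^ (j + 1)) (∏' j : ℕ, (1 - q ^ (j + 1))) := by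
  simpa [sub_eq_add_neg] using
    (multipliable_one_add_of_summable (summable_norm_neg_pow_succ hq)).hasProd

theorem tendsto_qPoch (hq : |q| < 1) :
    Tendsto (qPoch q) atTop (𝓝 (∏' j : ℕ, (1 - q ^ (j + 1)))) :=
  (hasProd_one_sub_pow_succ hq).tendsto_prod_nat

theorem tprod_one_sub_pow_succ_pos (hq : |q| < 1) : 0 < ∏' j : ℕ, (1 - q ^ (j + 1)) := by
  have hne := tprod_one_add_ne_zero_of_summable (fun j => ?_) (summable_norm_neg_pow_succ hq)
  · simp only [← sub_eq_add_neg] at hne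
    exact (ge_of_tendsto' (tendsto_qPoch hq) fun n => (qPoch_pos hq n).le).lt_of_ne' hne
  · rw [← sub_eq_add_neg]
    exact (one_sub_pow_succ_pos hq j).ne'

theorem tendsto_qBinom (hq : |q| < 1) {a m : ℕ → ℕ} {ℓ : ℝ}
    (ham : Tendsto (fun n => a n - m n) atTop atTop)
    (hm : Tendsto (fun n => qPoch q (m n)) atTop (𝓝 ℓ)) (hℓ : ℓ ≠ 0) :
    Tendsto (fun n => qBinom q (a n) (m n)) atTop (𝓝 ℓ⁻¹) := by
  have hL := tendsto_qPoch hq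
  have hL0 := (tprod_one_sub_pow_succ_pos hq).ne'
  have ha : Tendsto a atTop atTop := tendsto_atTop_mono (fun n => Nat.sub_le _ _) ham
  have hlim := (hL.comp ha).div (hm.mul (hL.comp ham)) (mul_ne_zero hℓ hL0)
  rw [mul_comm ℓ, ← div_div, div_self hL0, one_div] at hlim
  refine hlim.congr' ?_
  filter_upwards [ham.eventually_ge_atTop 1] with n hn
  simp only [Pi.div_apply, Function.comp_apply]
  rw [← qBinom_mul_qPoch q (by omega : m n ≤ a n),
    mul_div_cancel_right₀ _ (mul_ne_zero (qPoch_pos hq _).ne' (qPoch_pos hq _).ne')]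

theorem abs_qBinom_le_qBinom_abs (q : ℝ) (n k : ℕ) : |qBinom q n k| ≤ qBinom |q| n k := by
  induction n generalizing k with
  | zero => cases k <;> simp
  | succ n ih =>
    cases k with
    | zero => simp
    | succ k =>
      rw [qBinom_succ_succ, qBinom_succ_succ]
      calc |qBinom q n k + q ^ (k + 1) * qBinom q n (k + 1)|
          ≤ |qBinom q n k| + |q| ^ (k + 1) * |qBinom q n (k + 1)| := by
            rw [← abs_pow, ← abs_mul]; exact abs_add_le _ _
        _ ≤ qBinom |q| n k + |q| ^ (k + 1) * qBinom |q| n (k + 1) := by gcongr <;> exact ih _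

theorem qBinom_le_inv_qPoch {r : ℝ} (hr₀ : 0 ≤ r) (hr₁ : r < 1) (n k : ℕ) :
    qBinom r n k ≤ (qPoch r k)⁻¹ := by
  have hr : |r| < 1 := by rwa [abs_of_nonneg hr₀]
  induction n generalizing k with
  | zero =>
    cases k with
    | zero => simp [qPoch]
    | succ k => simpa using (qPoch_pos hr _).le
  | succ n ih =>
    cases k with
    | zero => simp [qPoch]
    | succ k =>
      have hP := (qPoch_pos hr k).ne'
      have hf := (one_sub_pow_succ_pos hr k).ne'
      calc qBinom r (n + 1) (k + 1)
          ≤ (qPoch r k)⁻¹ + r ^ (k + 1) * (qPoch r (k + 1))⁻¹ := by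
            rw [qBinom_succ_succ]; gcongr <;> exact ih _
        _ = (qPoch r (k + 1))⁻¹ := by rw [qPoch_succ]; field_simp; ring

theorem tprod_le_qPoch {r : ℝ} (hr₀ : 0 ≤ r) (hr₁ : r < 1) (k : ℕ) :
    ∏' j : ℕ, (1 - r ^ (j + 1)) ≤ qPoch r k := by
  have hr : |r| < 1 := by rwa [abs_of_nonneg hr₀]
  refine Antitone.le_of_tendsto (antitone_nat_of_succ_le fun n => ?_) (tendsto_qPoch hr) k
  rw [qPoch_succ]
  exact mul_le_of_le_one_right (qPoch_pos hr n).le (by linarith [pow_nonneg hr₀ (n + 1)])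

theorem abs_qBinom_le (hq : |q| < 1) (n k : ℕ) :
    |qBinom q n k| ≤ (∏' j : ℕ, (1 - |q| ^ (j + 1)))⁻¹ := by
  have hr : |(|q|)| < 1 := by rwa [abs_abs]
  calc |qBinom q n k| ≤ qBinom |q| n k := abs_qBinom_le_qBinom_abs q n k
    _ ≤ (qPoch |q| k)⁻¹ := qBinom_le_inv_qPoch (abs_nonneg q) hq n k
    _ ≤ _ := inv_anti₀ (tprod_one_sub_pow_succ_pos hr) (tprod_le_qPoch (abs_nonneg q) hq k)

theorem abs_qBinomInt_le (hq : |q| < 1) (n : ℕ) (k : ℤ) :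
    |qBinomInt q n k| ≤ (∏' j : ℕ, (1 - |q| ^ (j + 1)))⁻¹ := by
  rcases k with k | k
  · exact abs_qBinom_le hq n k
  · simpa [qBinomInt] using (tprod_one_sub_pow_succ_pos (by rwa [abs_abs] : |(|q|)| < 1)).le

theorem summable_abs_pow_natAbs (hq : |q| < 1) : Summable fun k : ℤ => |q| ^ k.natAbs :=
  Summable.of_nat_of_neg (by simpa using summable_geometric_of_lt_one (abs_nonneg q) hq)
    (by simpa using summable_geometric_of_lt_one (abs_nonneg q) hq)

theorem abs_thetaTerm_le (hq : |q| < 1) (k : ℤ) : |thetaTerm q k| ≤ |q| ^ k.natAbs := by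
  rw [thetaTerm, abs_mul, abs_pow, abs_neg, abs_one, one_pow, one_mul, abs_pow]
  exact pow_le_pow_of_le_one (abs_nonneg q) hq.le (natAbs_le_rrExponent k)

theorem tsum_thetaTerm (hq : |q| < 1) : ∑' k : ℤ, thetaTerm q k = ramTheta (-(q ^ 4)) (-q) := by
  have hs : Summable (thetaTerm q) :=
    .of_norm_bounded (summable_abs_pow_natAbs hq) (abs_thetaTerm_le hq)
  rw [tsum_of_nat_of_neg_add_one (hs.comp_injective Nat.cast_injective)
    (hs.comp_injective fun a b h => by simpa using h), ramTheta]
  simp only [thetaTerm_natCast, thetaTerm_neg_succ]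

theorem fermionicSum_eq_tsum (q : ℝ) (n : ℕ) :
    fermionicSum q n = ∑' j : ℕ, q ^ (j ^ 2 + j) * qBinom q (n - j) j := by
  rw [fermionicSum, Nat.antidiagonal_eq_map', sum_map, tsum_eq_sum (s := range (n + 1))]
  · rfl
  · intro j hj
    rw [mem_range] at hj
    rw [qBinom_eq_zero_of_lt q (by omega), mul_zero]

theorem bosonicSum_eq_tsum (q : ℝ) (n : ℕ) :
    bosonicSum q n = ∑' k : ℤ, bosonicTerm q n k := by
  have hs : ∀ k ∉ Icc (-(n : ℤ) - 1) n,
      ((n : ℤ) - 5 * k) / 2 < 0 ∨ n + 1 < ((n : ℤ) - 5 * k) / 2 :=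
    fun k hk => by rw [mem_Icc] at hk; omega
  rw [bosonicSum_eq_sum q hs, tsum_eq_sum fun k hk => bosonicTerm_eq_zero q (hs k hk)]

theorem tendsto_fermionicSum (hq : |q| < 1) :
    Tendsto (fermionicSum q) atTop (𝓝 (∑' l : ℕ, q ^ (l ^ 2 + l) / qPoch q l)) := by
  set C := (∏' j : ℕ, (1 - |q| ^ (j + 1)))⁻¹
  simp only [funext (fermionicSum_eq_tsum q), div_eq_mul_inv]
  refine tendsto_tsum_of_dominated_convergence (bound := fun j => |q| ^ j * C)
    ((summable_geometric_of_lt_one (abs_nonneg q) hq).mul_right C) (fun j => ?_)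
    (.of_forall fun n j => ?_)
  · have ham : Tendsto (fun n => n - j - j) atTop atTop :=
      tendsto_atTop_atTop.mpr fun b => ⟨b + 2 * j, fun n hn => by omega⟩
    exact (tendsto_qBinom hq ham tendsto_const_nhds (qPoch_pos hq j).ne').const_mul _
  · rw [Real.norm_eq_abs, abs_mul, abs_pow]
    exact mul_le_mul (pow_le_pow_of_le_one (abs_nonneg q) hq.le (by nlinarith))
      (abs_qBinom_le hq _ _) (abs_nonneg _) (by positivity)

theorem tendsto_bosonicSum (hq : |q| < 1) :
    Tendsto (bosonicSum q) atTop
      (𝓝 ((∑' k : ℤ, thetaTerm q k) / ∏' j : ℕ, (1 - q ^ (j + 1)))) := by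
  set C := (∏' j : ℕ, (1 - |q| ^ (j + 1)))⁻¹
  simp only [funext (bosonicSum_eq_tsum q), div_eq_mul_inv, ← tsum_mul_right]
  refine tendsto_tsum_of_dominated_convergence (bound := fun k => |q| ^ k.natAbs * C)
    ((summable_abs_pow_natAbs hq).mul_right C) (fun k => ?_) (.of_forall fun n k => ?_)
  · have hm : Tendsto (fun n : ℕ => (((n : ℤ) - 5 * k) / 2).toNat) atTop atTop :=
      tendsto_atTop_atTop.mpr fun b => ⟨2 * b + 5 * k.natAbs, fun n hn => by omega⟩
    have ham : Tendsto (fun n : ℕ => n + 1 - (((n : ℤ) - 5 * k) / 2).toNat) atTop atTop :=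
      tendsto_atTop_atTop.mpr fun b => ⟨2 * b + 5 * k.natAbs, fun n hn => by omega⟩
    refine ((tendsto_qBinom hq ham ((tendsto_qPoch hq).comp hm)
      (tprod_one_sub_pow_succ_pos hq).ne').const_mul (thetaTerm q k)).congr' ?_
    filter_upwards [eventually_ge_atTop (5 * k.natAbs)] with n hn
    rw [bosonicTerm, ← qBinomInt_natCast, Int.toNat_of_nonneg (by omega)]
  · rw [Real.norm_eq_abs, bosonicTerm, abs_mul]
    exact mul_le_mul (abs_thetaTerm_le hq k) (abs_qBinomInt_le hq _ _) (abs_nonneg _)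
      (by positivity)

end Analytic

theorem rogers_ramanujan_type_k_two (q : ℝ) (hq : |q| < 1) :
    ramTheta (-(q ^ 4)) (-q)
      = (∏' j : ℕ, (1 - q ^ (j + 1))) * ∑' l : ℕ, q ^ (l ^ 2 + l) / qPoch q l := by
  have hlim : ∑' l : ℕ, q ^ (l ^ 2 + l) / qPoch q l
      = (∑' k : ℤ, thetaTerm q k) / ∏' j : ℕ, (1 - q ^ (j + 1)) :=
    tendsto_nhds_unique (tendsto_fermionicSum hq)
      ((tendsto_bosonicSum hq).congr fun n => (fermionicSum_eq_bosonicSum q n).symm)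
  rw [hlim, tsum_thetaTerm hq, mul_div_cancel₀ _ (tprod_one_sub_pow_succ_pos hq).ne']
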